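/- Let X = [0,1]^ℤ with metric d(x,y) = ∑_{n∈ℤ} 2^{−|n|}|x_n − y_n|. Then the minimal number N(X,d,ε) of ε-balls needed to cover X satisfies N(X,d,ε) ≥ (1 + ⌊1/(Cε)⌋)^{c·log(1/ε)} for suitable constants C, c > 0 and small ε, and consequently the lower box dimension of (X,d) is infinite: liminf_{ε→0} log N(X,d,ε) / log(1/ε) = ∞. -/

import Mathlib

/-!
Letting the coordinates `0, …, m - 1` range over `{0, 1/K, …, 1}` gives `(K + 1)^m` points of
`[0,1]^ℤ` at mutual distance at least `2 / (K 2^m)`; an `ε`-cover with `2ε` below that distance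
needs one centre per grid point.
Taking `m ≈ log(1/ε) / 2` and `K ≈ ε^{-1/2}` gives `log N(ε) ≳ log(1/ε)^2 / 4`, which is
superlinear in `log(1/ε)`. Finite covers exist because `[0,1]^ℤ` is compact and `d(c, ·)` is
continuous for the product topology, being a uniformly convergent series.
-/

open Real Filter Set Topology

noncomputable def cubeDist (x y : ℤ → Set.Icc (0 : ℝ) 1) : ℝ :=
  ∑' n : ℤ, (2 : ℝ)⁻¹ ^ n.natAbs * |((x n : ℝ)) - ((y n : ℝ))|

noncomputable def cubeCovNum (ε : ℝ) : ℕ :=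
  sInf { k | ∃ F : Finset (ℤ → Set.Icc (0 : ℝ) 1), F.card = k ∧
      ∀ x : ℤ → Set.Icc (0 : ℝ) 1, ∃ c ∈ F, cubeDist c x < ε }

lemma summable_two_inv_pow_natAbs : Summable (fun n : ℤ => (2 : ℝ)⁻¹ ^ n.natAbs) := by
  apply Summable.of_nat_of_neg <;>
  · simp only [Int.natAbs_natCast, Int.natAbs_neg]
    exact summable_geometric_of_lt_one (by norm_num) (by norm_num)

lemma abs_sub_le_one_of_mem_Icc (a b : Icc (0 : ℝ) 1) : |(a : ℝ) - b| ≤ 1 := by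
  obtain ⟨⟨ha₀, ha₁⟩, hb₀, hb₁⟩ := And.intro a.2 b.2
  rw [abs_le]
  constructor <;> linarith

section cubeDist

variable (x y z : ℤ → Icc (0 : ℝ) 1)

lemma cubeDist_summand_le (n : ℤ) :
    (2 : ℝ)⁻¹ ^ n.natAbs * |(x n : ℝ) - y n| ≤ (2 : ℝ)⁻¹ ^ n.natAbs :=
  mul_le_of_le_one_right (by positivity) (abs_sub_le_one_of_mem_Icc _ _)

lemma summable_cubeDist_summand :
    Summable (fun n : ℤ => (2 : ℝ)⁻¹ ^ n.natAbs * |(x n : ℝ) - y n|) :=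
  .of_nonneg_of_le (fun _ => by positivity) (cubeDist_summand_le x y) summable_two_inv_pow_natAbs

lemma cubeDist_summand_le_cubeDist (n : ℤ) :
    (2 : ℝ)⁻¹ ^ n.natAbs * |(x n : ℝ) - y n| ≤ cubeDist x y :=
  (summable_cubeDist_summand x y).le_tsum n fun _ _ => by positivity

@[simp]
lemma cubeDist_self : cubeDist x x = 0 := by
  simp [cubeDist]

lemma cubeDist_le_cubeDist_add_cubeDist : cubeDist x y ≤ cubeDist z x + cubeDist z y := by
  unfold cubeDist
  rw [← (summable_cubeDist_summand z x).tsum_add (summable_cubeDist_summand z y)]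
  refine (summable_cubeDist_summand x y).tsum_le_tsum (fun n => ?_)
    ((summable_cubeDist_summand z x).add (summable_cubeDist_summand z y))
  rw [← mul_add, abs_sub_comm (z n : ℝ)]
  exact mul_le_mul_of_nonneg_left (abs_sub_le _ _ _) (by positivity)

lemma continuous_cubeDist : Continuous (cubeDist x) := by
  refine continuous_tsum (fun n => by fun_prop) summable_two_inv_pow_natAbs fun n y => ?_
  rw [Real.norm_of_nonneg (by positivity)]
  exact cubeDist_summand_le x y n

end cubeDist

lemma exists_finset_forall_exists_cubeDist_lt {ε : ℝ} (hε : 0 < ε) :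
    ∃ F : Finset (ℤ → Icc (0 : ℝ) 1), ∀ x, ∃ c ∈ F, cubeDist c x < ε := by
  obtain ⟨F, -, hF⟩ := isCompact_univ.elim_nhds_subcover (fun c => {x | cubeDist c x < ε})
    fun c _ => (isOpen_lt (continuous_cubeDist c) continuous_const).mem_nhds (by simpa using hε)
  exact ⟨F, fun x => by simpa using hF (mem_univ x)⟩

lemma card_le_card_of_separated_of_forall_exists_cubeDist_lt {ι : Type*} [Fintype ι]
    {ε : ℝ} (p : ι → ℤ → Icc (0 : ℝ) 1)
    (hp : ∀ i j, i ≠ j → 2 * ε ≤ cubeDist (p i) (p j))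
    (F : Finset (ℤ → Icc (0 : ℝ) 1)) (hF : ∀ x, ∃ c ∈ F, cubeDist c x < ε) :
    Fintype.card ι ≤ F.card := by
  choose c hcF hc using fun i => hF (p i)
  have hinj : Function.Injective c := by
    intro i j hij
    by_contra hne
    have := cubeDist_le_cubeDist_add_cubeDist (p i) (p j) (c j)
    linarith [hp i j hne, hc i, hc j, hij ▸ hc i]
  simpa using Fintype.card_le_of_injective (fun i => (⟨c i, hcF i⟩ : F))
    fun i j h => hinj (congrArg Subtype.val h)

/-- Coordinate `n` is `f n / K` for `0 ≤ n < m`, `0` for `n ≥ m`, and `f 0 / K` for `n < 0`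
(where `Int.toNat n = 0`). -/
noncomputable def gridPoint (K : ℕ) {m : ℕ} (f : Fin m → Fin (K + 1)) : ℤ → Icc (0 : ℝ) 1 :=
  fun n => if h : n.toNat < m then
    ⟨((f ⟨n.toNat, h⟩ : ℕ) : ℝ) / K, by positivity,
      div_le_one_of_le₀ (by exact_mod_cast Nat.le_of_lt_succ (f _).2) (Nat.cast_nonneg K)⟩
  else ⟨0, left_mem_Icc.2 zero_le_one⟩

lemma gridPoint_natCast (K : ℕ) {m : ℕ} (f : Fin m → Fin (K + 1)) (i : Fin m) :
    (gridPoint K f i : ℝ) = ((f i : ℕ) : ℝ) / K := by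
  simp [gridPoint]

lemma div_le_cubeDist_gridPoint (K : ℕ) {m : ℕ} {f g : Fin m → Fin (K + 1)} (hfg : f ≠ g) :
    2 / (K * 2 ^ m) ≤ cubeDist (gridPoint K f) (gridPoint K g) := by
  obtain ⟨i, hi⟩ := Function.ne_iff.mp hfg
  refine le_trans ?_ (cubeDist_summand_le_cubeDist _ _ (i : ℤ))
  rw [gridPoint_natCast, gridPoint_natCast, ← sub_div, abs_div, Nat.abs_cast,
    Int.natAbs_natCast]
  have hfar : (1 : ℝ) ≤ |((f i : ℕ) : ℝ) - (g i : ℕ)| := by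
    simpa only [← Real.dist_eq, Nat.dist_cast_real] using
      Nat.pairwise_one_le_dist (Fin.val_ne_of_ne hi)
  have hweight : 2 / (2 : ℝ) ^ m ≤ (2 : ℝ)⁻¹ ^ (i : ℕ) := by
    rw [inv_pow, div_le_iff₀ (by positivity), ← div_eq_inv_mul,
      le_div_iff₀ (by positivity), ← pow_succ']
    exact pow_le_pow_right₀ (by norm_num) i.2
  calc 2 / (K * 2 ^ m) = 2 / (2 : ℝ) ^ m * (1 / K) := by ring
    _ ≤ _ := by gcongr

lemma pow_le_cubeCovNum {ε : ℝ} (hε : 0 < ε) {K m : ℕ} (hK : 0 < K)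
    (hεK : ε * (K * 2 ^ m) ≤ 1) : (K + 1) ^ m ≤ cubeCovNum ε := by
  obtain ⟨F, hF⟩ := exists_finset_forall_exists_cubeDist_lt hε
  refine le_csInf ⟨F.card, F, rfl, hF⟩ ?_
  rintro _ ⟨F, rfl, hF⟩
  have hsep : ∀ f g : Fin m → Fin (K + 1), f ≠ g →
      2 * ε ≤ cubeDist (gridPoint K f) (gridPoint K g) := fun f g hfg =>
    le_trans (by rw [le_div_iff₀ (by positivity)]; linarith) (div_le_cubeDist_gridPoint K hfg)
  simpa using card_le_card_of_separated_of_forall_exists_cubeDist_lt _ hsep F hF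

lemma log_cubeCovNum_ge {ε : ℝ} (hε : 0 < ε) (hε₁ : ε ≤ 1) :
    log (1 / ε) ^ 2 / 4 - log (1 / ε) / 2 ≤ log (cubeCovNum ε) := by
  set L := log (1 / ε)
  have hL : 0 ≤ L := log_nonneg (one_le_one_div hε hε₁)
  set m := ⌊L / 2⌋₊
  set K := ⌊exp (L / 2)⌋₊
  have hK : 0 < K := Nat.floor_pos.2 (one_le_exp (by positivity))
  have h2m : (2 : ℝ) ^ m ≤ exp (L / 2) :=
    calc (2 : ℝ) ^ m ≤ exp 1 ^ m := by gcongr; linarith [add_one_le_exp 1]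
      _ = exp m := by rw [← exp_nat_mul, mul_one]
      _ ≤ exp (L / 2) := exp_le_exp.2 (Nat.floor_le (by positivity))
  have hεK : ε * (K * 2 ^ m) ≤ 1 :=
    calc ε * (K * 2 ^ m) ≤ ε * (exp (L / 2) * exp (L / 2)) := by
          gcongr; exact Nat.floor_le (exp_pos _).le
      _ = 1 := by rw [← exp_add, add_halves, exp_log (by positivity)]; field_simp
  have hm : L / 2 - 1 ≤ m := (Nat.sub_one_lt_floor _).le
  have hlogK : L / 2 ≤ log (K + 1) :=
    (le_log_iff_exp_le (by positivity)).2 (Nat.lt_floor_add_one _).le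
  calc L ^ 2 / 4 - L / 2 ≤ m * log (K + 1) := by nlinarith
    _ = log (((K + 1 : ℕ) : ℝ) ^ m) := by push_cast; rw [log_pow]
    _ ≤ log (cubeCovNum ε) :=
      log_le_log (by positivity) (by exact_mod_cast pow_le_cubeCovNum hε hK hεK)

lemma le_log_one_div_of_le_exp_neg {ε a : ℝ} (hε : 0 < ε) (h : ε ≤ exp (-a)) :
    a ≤ log (1 / ε) := by
  rw [one_div, log_inv, le_neg]
  exact (log_le_iff_le_exp hε).2 h

lemma rpow_le_cubeCovNum {ε : ℝ} (hε : 0 < ε) (hε₃ : ε ≤ exp (-3)) :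
    (1 + (⌊1 / ε⌋₊ : ℝ)) ^ (1 / 16 * log (1 / ε)) ≤ cubeCovNum ε := by
  set L := log (1 / ε)
  have hL : 3 ≤ L := le_log_one_div_of_le_exp_neg hε hε₃
  have hε₁ : ε ≤ 1 := hε₃.trans (exp_le_one_iff.2 (by norm_num))
  have hN := log_cubeCovNum_ge hε hε₁
  have hNpos : (0 : ℝ) < cubeCovNum ε := by
    have hlogN : 0 < log (cubeCovNum ε) := by nlinarith
    exact Nat.cast_pos.2 (Nat.pos_of_ne_zero fun h => by simp [h] at hlogN)
  have hlogB : log (1 + ⌊1 / ε⌋₊) ≤ 1 + L :=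
    calc log (1 + ⌊1 / ε⌋₊) ≤ log (2 * (1 / ε)) := by
          gcongr
          linarith [Nat.floor_le (one_div_pos.2 hε).le, one_le_one_div hε hε₁]
      _ = log 2 + L := log_mul two_ne_zero (by positivity)
      _ ≤ 1 + L := by linarith [log_two_lt_d9]
  rw [← exp_log hNpos, rpow_def_of_pos (by positivity), exp_le_exp]
  nlinarith [log_nonneg (show (1 : ℝ) ≤ 1 + ⌊1 / ε⌋₊ by simp)]

lemma tendsto_log_one_div_nhdsGT_zero :
    Tendsto (fun ε : ℝ => log (1 / ε)) (𝓝[>] 0) atTop :=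
  (tendsto_neg_atBot_atTop.comp tendsto_log_nhdsGT_zero).congr fun ε => by simp

theorem stmt_13 :
    (∃ C c : ℝ, 0 < C ∧ 0 < c ∧ ∃ ε₀ : ℝ, 0 < ε₀ ∧ ∀ ε : ℝ, 0 < ε → ε < ε₀ →
      ((1 + (⌊1 / (C * ε)⌋₊ : ℝ)) ^ (c * Real.log (1 / ε)) : ℝ) ≤ (cubeCovNum ε : ℝ)) ∧
    Tendsto (fun ε : ℝ => Real.log (cubeCovNum ε) / Real.log (1 / ε))
      (𝓝[>] (0 : ℝ)) atTop := by
  refine ⟨⟨1, 1 / 16, one_pos, by norm_num, exp (-3), exp_pos _, fun ε hε hε₀ => ?_⟩, ?_⟩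
  · simpa only [one_mul] using rpow_le_cubeCovNum hε hε₀.le
  · have hminor : Tendsto (fun ε : ℝ => log (1 / ε) / 4 + -(1 / 2)) (𝓝[>] 0) atTop :=
      tendsto_atTop_add_const_right _ _
        (tendsto_log_one_div_nhdsGT_zero.atTop_div_const (by norm_num))
    refine tendsto_atTop_mono' _ ?_ hminor
    filter_upwards [Ioo_mem_nhdsGT one_pos] with ε ⟨hε, hε₁⟩
    have hL : 0 < log (1 / ε) := log_pos (one_lt_one_div hε hε₁)
    rw [le_div_iff₀ hL]
    linarith [log_cubeCovNum_ge hε hε₁.le]
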